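/- Closure under union for positive node constraints: if G₁ and G₂ are two sub-data-graphs of a common data-graph G, each consistent with respect to a set R of positive Reg-GXPath node expressions, then their union G₁ ∪ G₂ (taken inside G) is also consistent with respect to R. -/

import Mathlib

/-- A data-graph: a set of nodes, an edge labeling, and a data-value assignment. -/
structure DataGraph (V E Dv : Type) where
  nodes : Set V
  edges : V → V → Set E
  data : V → Dv

mutual
/-- Reg-GXPath path expressions. -/
inductive PExp (E Dv : Type) where
  | eps : PExp E Dv
  | wild : PExp E Dv
  | lab : E → PExp E Dv
  | inv : E → PExp E Dv
  | test : NExp E Dv → PExp E Dv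
  | comp : PExp E Dv → PExp E Dv → PExp E Dv
  | union : PExp E Dv → PExp E Dv → PExp E Dv
  | inter : PExp E Dv → PExp E Dv → PExp E Dv
  | star : PExp E Dv → PExp E Dv
  | compl : PExp E Dv → PExp E Dv
  | iter : PExp E Dv → ℕ → ℕ → PExp E Dv
/-- Reg-GXPath node expressions. -/
inductive NExp (E Dv : Type) where
  | neg : NExp E Dv → NExp E Dv
  | and : NExp E Dv → NExp E Dv → NExp E Dv
  | or : NExp E Dv → NExp E Dv → NExp E Dv
  | diam : PExp E Dv → NExp E Dv
  | eqc : Dv → NExp E Dv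
  | neqc : Dv → NExp E Dv
  | cmpEq : PExp E Dv → PExp E Dv → NExp E Dv
  | cmpNeq : PExp E Dv → PExp E Dv → NExp E Dv
end

variable {V E Dv : Type}

/-- Relational composition of binary relations presented as sets of pairs. -/
def dgComp (R S : Set (V × V)) : Set (V × V) := {p | ∃ y, (p.1, y) ∈ R ∧ (y, p.2) ∈ S}

/-- The identity relation on the nodes of a data-graph. -/
def DataGraph.idRel (G : DataGraph V E Dv) : Set (V × V) := {p | p.1 = p.2 ∧ p.1 ∈ G.nodes}

/-- Iterated relational composition, with `I` as the 0-th power (identity). -/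
def dgPow (I R : Set (V × V)) : ℕ → Set (V × V)
  | 0 => I
  | k + 1 => dgComp (dgPow I R k) R

mutual
/-- Semantics of path expressions on a data-graph: a set of pairs of nodes. -/
def psem (G : DataGraph V E Dv) : PExp E Dv → Set (V × V)
  | .eps => G.idRel
  | .wild => {p | p.1 ∈ G.nodes ∧ p.2 ∈ G.nodes ∧ (G.edges p.1 p.2).Nonempty}
  | .lab a => {p | p.1 ∈ G.nodes ∧ p.2 ∈ G.nodes ∧ a ∈ G.edges p.1 p.2}
  | .inv a => {p | p.1 ∈ G.nodes ∧ p.2 ∈ G.nodes ∧ a ∈ G.edges p.2 p.1}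
  | .test φ => {p | p.1 = p.2 ∧ p.1 ∈ nsem G φ}
  | .comp α β => dgComp (psem G α) (psem G β)
  | .union α β => psem G α ∪ psem G β
  | .inter α β => psem G α ∩ psem G β
  | .star α => G.idRel ∪ {p | Relation.TransGen (fun x y => (x, y) ∈ psem G α) p.1 p.2}
  | .compl α => {p | p.1 ∈ G.nodes ∧ p.2 ∈ G.nodes ∧ p ∉ psem G α}
  | .iter α n m => {p | ∃ k, n ≤ k ∧ k ≤ m ∧ p ∈ dgPow G.idRel (psem G α) k}
/-- Semantics of node expressions on a data-graph: a set of nodes. -/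
def nsem (G : DataGraph V E Dv) : NExp E Dv → Set V
  | .neg φ => {v | v ∈ G.nodes ∧ v ∉ nsem G φ}
  | .and φ ψ => nsem G φ ∩ nsem G ψ
  | .or φ ψ => nsem G φ ∪ nsem G ψ
  | .diam α => {v | ∃ w, (v, w) ∈ psem G α}
  | .eqc c => {v | v ∈ G.nodes ∧ G.data v = c}
  | .neqc c => {v | v ∈ G.nodes ∧ G.data v ≠ c}
  | .cmpEq α β => {v | ∃ v' v'', (v, v') ∈ psem G α ∧ (v, v'') ∈ psem G β ∧ G.data v' = G.data v''}
  | .cmpNeq α β => {v | ∃ v' v'', (v, v') ∈ psem G α ∧ (v, v'') ∈ psem G β ∧ G.data v' ≠ G.data v''}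
end

mutual
/-- Positive (complement/negation-free) path expressions. -/
def PExp.Positive : PExp E Dv → Prop
  | .eps => True
  | .wild => True
  | .lab _ => True
  | .inv _ => True
  | .test φ => φ.Positive
  | .comp α β => α.Positive ∧ β.Positive
  | .union α β => α.Positive ∧ β.Positive
  | .inter α β => α.Positive ∧ β.Positive
  | .star α => α.Positive
  | .compl _ => False
  | .iter α _ _ => α.Positive
/-- Positive (negation-free) node expressions. -/
def NExp.Positive : NExp E Dv → Prop
  | .neg _ => False
  | .and φ ψ => φ.Positive ∧ ψ.Positive
  | .or φ ψ => φ.Positive ∧ ψ.Positive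
  | .diam α => α.Positive
  | .eqc _ => True
  | .neqc _ => True
  | .cmpEq α β => α.Positive ∧ β.Positive
  | .cmpNeq α β => α.Positive ∧ β.Positive
end

/-- `G.Subgraph G'` : `G` is a sub-data-graph of `G'`. -/
def DataGraph.Subgraph (G G' : DataGraph V E Dv) : Prop :=
  G.nodes ⊆ G'.nodes ∧ (∀ v ∈ G.nodes, ∀ w ∈ G.nodes, G.edges v w ⊆ G'.edges v w) ∧
    ∀ v ∈ G.nodes, G.data v = G'.data v

/-- Consistency of a data-graph w.r.t. sets of path and node constraints. -/
def DataGraph.Consistent (G : DataGraph V E Dv)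
    (Rp : Set (PExp E Dv)) (Rn : Set (NExp E Dv)) : Prop :=
  (∀ α ∈ Rp, ∀ v ∈ G.nodes, ∀ w ∈ G.nodes, (v, w) ∈ psem G α) ∧
    (∀ φ ∈ Rn, ∀ v ∈ G.nodes, v ∈ nsem G φ)

/-- `H` is a subset repair of `G` w.r.t. constraints `Rp ∪ Rn`. -/
def IsSubsetRepair (H G : DataGraph V E Dv)
    (Rp : Set (PExp E Dv)) (Rn : Set (NExp E Dv)) : Prop :=
  H.Consistent Rp Rn ∧ H.Subgraph G ∧
    ∀ K : DataGraph V E Dv, K.Consistent Rp Rn → K.Subgraph G → H.Subgraph K → K.Subgraph H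

/-- `H` is a superset repair of `G` w.r.t. constraints `Rp ∪ Rn`. -/
def IsSupersetRepair (H G : DataGraph V E Dv)
    (Rp : Set (PExp E Dv)) (Rn : Set (NExp E Dv)) : Prop :=
  H.Consistent Rp Rn ∧ G.Subgraph H ∧
    ∀ K : DataGraph V E Dv, K.Consistent Rp Rn → G.Subgraph K → K.Subgraph H → H.Subgraph K
mutual
theorem psem_nodes (H : DataGraph V E Dv) (α : PExp E Dv) :
    ∀ p ∈ psem H α, p.1 ∈ H.nodes ∧ p.2 ∈ H.nodes := by
  cases α with
  | eps => rintro ⟨a, b⟩ ⟨h, hn⟩; exact ⟨hn, h ▸ hn⟩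
  | wild => rintro ⟨a, b⟩ ⟨h1, h2, _⟩; exact ⟨h1, h2⟩
  | lab a => rintro ⟨x, y⟩ ⟨h1, h2, _⟩; exact ⟨h1, h2⟩
  | inv a => rintro ⟨x, y⟩ ⟨h1, h2, _⟩; exact ⟨h1, h2⟩
  | test φ =>
    rintro ⟨a, b⟩ ⟨h, hn⟩
    have := nsem_nodes H φ a hn
    exact ⟨this, h ▸ this⟩
  | comp α β =>
    rintro ⟨a, b⟩ ⟨y, hy1, hy2⟩
    exact ⟨(psem_nodes H α _ hy1).1, (psem_nodes H β _ hy2).2⟩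
  | union α β =>
    rintro ⟨a, b⟩ (h | h)
    · exact psem_nodes H α _ h
    · exact psem_nodes H β _ h
  | inter α β =>
    rintro ⟨a, b⟩ ⟨h, _⟩
    exact psem_nodes H α _ h
  | star α =>
    rintro ⟨a, b⟩ (⟨h, hn⟩ | h)
    · exact ⟨hn, h ▸ hn⟩
    · simp only [Set.mem_setOf_eq] at h
      induction h with
      | single h => exact psem_nodes H α _ h
      | tail _ h ih => exact ⟨ih.1, (psem_nodes H α _ h).2⟩
  | compl α => rintro ⟨a, b⟩ ⟨h1, h2, _⟩; exact ⟨h1, h2⟩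
  | iter α n m =>
    rintro ⟨a, b⟩ ⟨k, hk1, hk2, hk⟩
    clear hk1 hk2
    induction k generalizing b with
    | zero => exact ⟨hk.2, hk.1 ▸ hk.2⟩
    | succ k ih =>
      obtain ⟨y, hy1, hy2⟩ := hk
      exact ⟨(ih y hy1).1, (psem_nodes H α _ hy2).2⟩

theorem nsem_nodes (H : DataGraph V E Dv) (φ : NExp E Dv) :
    ∀ v ∈ nsem H φ, v ∈ H.nodes := by
  cases φ with
  | neg φ => rintro v ⟨h, _⟩; exact h
  | and φ ψ => rintro v ⟨h, _⟩; exact nsem_nodes H φ v h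
  | or φ ψ =>
    rintro v (h | h)
    · exact nsem_nodes H φ v h
    · exact nsem_nodes H ψ v h
  | diam α => rintro v ⟨w, h⟩; exact (psem_nodes H α _ h).1
  | eqc c => rintro v ⟨h, _⟩; exact h
  | neqc c => rintro v ⟨h, _⟩; exact h
  | cmpEq α β => rintro v ⟨a, b, h, _⟩; exact (psem_nodes H α _ h).1
  | cmpNeq α β => rintro v ⟨a, b, h, _⟩; exact (psem_nodes H α _ h).1
end

mutual
theorem psem_mono (H K : DataGraph V E Dv) (h : H.Subgraph K) (α : PExp E Dv)
    (hp : α.Positive) : psem H α ⊆ psem K α := by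
  obtain ⟨hn, he, hd⟩ := h
  cases α with
  | eps => rintro ⟨a, b⟩ ⟨hab, ha⟩; exact ⟨hab, hn ha⟩
  | wild =>
    rintro ⟨a, b⟩ ⟨ha, hb, e, hE⟩
    exact ⟨hn ha, hn hb, e, he a ha b hb hE⟩
  | lab l =>
    rintro ⟨a, b⟩ ⟨ha, hb, hE⟩
    exact ⟨hn ha, hn hb, he a ha b hb hE⟩
  | inv l =>
    rintro ⟨a, b⟩ ⟨ha, hb, hE⟩
    exact ⟨hn ha, hn hb, he b hb a ha hE⟩
  | test φ =>
    rintro ⟨a, b⟩ ⟨hab, hφ⟩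
    exact ⟨hab, nsem_mono H K ⟨hn, he, hd⟩ φ hp hφ⟩
  | comp α β =>
    rintro ⟨a, b⟩ ⟨y, h1, h2⟩
    exact ⟨y, psem_mono H K ⟨hn, he, hd⟩ α hp.1 h1, psem_mono H K ⟨hn, he, hd⟩ β hp.2 h2⟩
  | union α β =>
    rintro ⟨a, b⟩ (h1 | h1)
    · exact Or.inl (psem_mono H K ⟨hn, he, hd⟩ α hp.1 h1)
    · exact Or.inr (psem_mono H K ⟨hn, he, hd⟩ β hp.2 h1)
  | inter α β =>
    rintro ⟨a, b⟩ ⟨h1, h2⟩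
    exact ⟨psem_mono H K ⟨hn, he, hd⟩ α hp.1 h1, psem_mono H K ⟨hn, he, hd⟩ β hp.2 h2⟩
  | star α =>
    rintro ⟨a, b⟩ (⟨hab, ha⟩ | h1)
    · exact Or.inl ⟨hab, hn ha⟩
    · exact Or.inr (Relation.TransGen.mono
        (fun x y hxy => psem_mono H K ⟨hn, he, hd⟩ α hp hxy) a b h1)
  | compl α => exact absurd hp id
  | iter α n m =>
    rintro ⟨a, b⟩ ⟨k, hk1, hk2, hk⟩
    refine ⟨k, hk1, hk2, ?_⟩
    clear hk1 hk2
    induction k generalizing b with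
    | zero => exact ⟨hk.1, hn hk.2⟩
    | succ k ih =>
      obtain ⟨y, hy1, hy2⟩ := hk
      exact ⟨y, ih y hy1, psem_mono H K ⟨hn, he, hd⟩ α hp hy2⟩

theorem nsem_mono (H K : DataGraph V E Dv) (h : H.Subgraph K) (φ : NExp E Dv)
    (hp : φ.Positive) : nsem H φ ⊆ nsem K φ := by
  obtain ⟨hn, he, hd⟩ := h
  cases φ with
  | neg φ => exact absurd hp id
  | and φ ψ =>
    rintro v ⟨h1, h2⟩
    exact ⟨nsem_mono H K ⟨hn, he, hd⟩ φ hp.1 h1, nsem_mono H K ⟨hn, he, hd⟩ ψ hp.2 h2⟩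
  | or φ ψ =>
    rintro v (h1 | h1)
    · exact Or.inl (nsem_mono H K ⟨hn, he, hd⟩ φ hp.1 h1)
    · exact Or.inr (nsem_mono H K ⟨hn, he, hd⟩ ψ hp.2 h1)
  | diam α =>
    rintro v ⟨w, h1⟩
    exact ⟨w, psem_mono H K ⟨hn, he, hd⟩ α hp h1⟩
  | eqc c => rintro v ⟨hv, hc⟩; exact ⟨hn hv, (hd v hv).symm.trans hc⟩
  | neqc c => rintro v ⟨hv, hc⟩; exact ⟨hn hv, (hd v hv).symm.trans_ne hc⟩
  | cmpEq α β =>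
    rintro v ⟨a, b, h1, h2, hab⟩
    refine ⟨a, b, psem_mono H K ⟨hn, he, hd⟩ α hp.1 h1,
      psem_mono H K ⟨hn, he, hd⟩ β hp.2 h2, ?_⟩
    rw [← hd a (psem_nodes H α _ h1).2, ← hd b (psem_nodes H β _ h2).2]
    exact hab
  | cmpNeq α β =>
    rintro v ⟨a, b, h1, h2, hab⟩
    refine ⟨a, b, psem_mono H K ⟨hn, he, hd⟩ α hp.1 h1,
      psem_mono H K ⟨hn, he, hd⟩ β hp.2 h2, ?_⟩
    rw [← hd a (psem_nodes H α _ h1).2, ← hd b (psem_nodes H β _ h2).2]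
    exact hab
end

/-- the union (inside a common data-graph `G`) of two sub-data-graphs,
each consistent w.r.t. a set `R` of positive node expressions, is consistent w.r.t. `R`. -/
theorem stmt3 {V E Dv : Type} (G G₁ G₂ : DataGraph V E Dv) (R : Set (NExp E Dv))
    (hpos : ∀ φ ∈ R, NExp.Positive φ)
    (h1 : G₁.Subgraph G) (h2 : G₂.Subgraph G)
    (c1 : G₁.Consistent ∅ R) (c2 : G₂.Consistent ∅ R) :
    DataGraph.Consistent
      (⟨G₁.nodes ∪ G₂.nodes,
        fun v w => {e | (v ∈ G₁.nodes ∧ w ∈ G₁.nodes ∧ e ∈ G₁.edges v w) ∨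
                        (v ∈ G₂.nodes ∧ w ∈ G₂.nodes ∧ e ∈ G₂.edges v w)},
        G.data⟩ : DataGraph V E Dv) ∅ R := by
  set U : DataGraph V E Dv :=
    ⟨G₁.nodes ∪ G₂.nodes,
      fun v w => {e | (v ∈ G₁.nodes ∧ w ∈ G₁.nodes ∧ e ∈ G₁.edges v w) ∨
                      (v ∈ G₂.nodes ∧ w ∈ G₂.nodes ∧ e ∈ G₂.edges v w)},
      G.data⟩ with hU
  have s1 : G₁.Subgraph U := by
    refine ⟨fun v hv => Or.inl hv, fun v hv w hw e heE => Or.inl ⟨hv, hw, heE⟩,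
      fun v hv => ?_⟩
    exact h1.2.2 v hv
  have s2 : G₂.Subgraph U := by
    refine ⟨fun v hv => Or.inr hv, fun v hv w hw e heE => Or.inr ⟨hv, hw, heE⟩,
      fun v hv => ?_⟩
    exact h2.2.2 v hv
  constructor
  · intro α hα; exact absurd hα (Set.notMem_empty α)
  · rintro φ hφ v (hv | hv)
    · exact nsem_mono G₁ U s1 φ (hpos φ hφ) (c1.2 φ hφ v hv)
    · exact nsem_mono G₂ U s2 φ (hpos φ hφ) (c2.2 φ hφ v hv)
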